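/- For all n ≥ 2 and 2 ≤ k ≤ n, the generalized Narayana numbers satisfy the recurrence {n choose k}·{n choose k-1} = {n} · ( {n-1 choose k-1}^2 + t · {n-1 choose k} · {n-1 choose k-2} ), as an identity of polynomials in s and t. -/
import Mathlib


open MvPolynomial in
/-- The Lucas polynomials in `ℤ[s,t]`, where `s = X 0` and `t = X 1`:
`{0} = 0`, `{1} = 1`, `{n} = s·{n-1} + t·{n-2}`. -/
noncomputable def lucas : ℕ → MvPolynomial (Fin 2) ℤ
  | 0 => 0
  | 1 => 1
  | n + 2 => X 0 * lucas (n + 1) + X 1 * lucas n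

/-- The Lucas factorial `{n}! = {n}·{n-1}···{1}`, with `{0}! = 1`. -/
noncomputable def lucasFact : ℕ → MvPolynomial (Fin 2) ℤ
  | 0 => 1
  | n + 1 => lucas (n + 1) * lucasFact n

open MvPolynomial

lemma lucas_add (a : ℕ) : ∀ b : ℕ,
    lucas (a + b + 1) = lucas (a + 1) * lucas (b + 1) + X 1 * lucas a * lucas b := by
  induction a with
  | zero => intro b; simp [lucas]
  | succ a ih =>
    intro b
    rw [show a + 1 + b + 1 = a + (b + 1) + 1 from by ring, ih (b + 1),
        show lucas (a + 2) = X 0 * lucas (a + 1) + X 1 * lucas a from rfl,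
        show lucas (b + 2) = X 0 * lucas (b + 1) + X 1 * lucas b from rfl]
    ring

lemma ev_lucas (n : ℕ) : eval ![1, 0] (lucas (n + 1)) = 1 := by
  induction n with
  | zero => simp [lucas]
  | succ n ih => simp [lucas, ih]

lemma ev_lucasFact (n : ℕ) : eval ![1, 0] (lucasFact n) = 1 := by
  induction n with
  | zero => simp [lucasFact]
  | succ n ih => simp [lucasFact, ih, ev_lucas]

lemma lucasFact_ne_zero (n : ℕ) : lucasFact n ≠ 0 := by
  intro h
  have := ev_lucasFact n
  rw [h] at this
  simp at this

/-- The recurrence for the generalized Narayana numbers, stated for any function `L`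
satisfying the defining property of the lucanomial coefficients:
`{k}! * {n-k}! * {n choose k} = {n}!` for `0 ≤ k ≤ n`, and `{n choose k} = 0`
otherwise. -/
theorem generalized_narayana_recurrence
    (L : ℤ → ℤ → MvPolynomial (Fin 2) ℤ)
    (hL : ∀ n k : ℤ, 0 ≤ k → k ≤ n →
      lucasFact k.toNat * lucasFact (n - k).toNat * L n k = lucasFact n.toNat)
    (hL0 : ∀ n k : ℤ, ¬(0 ≤ k ∧ k ≤ n) → L n k = 0)
    (n k : ℤ) (hn : 2 ≤ n) (hk : 2 ≤ k) (hkn : k ≤ n) :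
    L n k * L n (k - 1) =
      lucas n.toNat *
        ((L (n - 1) (k - 1)) ^ 2 +
          MvPolynomial.X 1 * L (n - 1) k * L (n - 1) (k - 2)) := by
  lift n to ℕ using (by omega)
  lift k to ℕ using (by omega)
  obtain ⟨p, rfl⟩ : ∃ p, k = p + 2 := ⟨k - 2, by omega⟩
  rcases Nat.lt_or_ge (p + 2) n with hlt | hge
  · -- case k < n
    obtain ⟨q, rfl⟩ : ∃ q, n = p + q + 3 := ⟨n - p - 3, by omega⟩
    have hA := hL (↑(p + q + 3)) (↑(p + 2)) (by omega) (by omega)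
    have hB := hL (↑(p + q + 3)) (↑(p + 2) - 1) (by omega) (by omega)
    have hC := hL (↑(p + q + 3) - 1) (↑(p + 2) - 1) (by omega) (by omega)
    have hD := hL (↑(p + q + 3) - 1) (↑(p + 2)) (by omega) (by omega)
    have hE := hL (↑(p + q + 3) - 1) (↑(p + 2) - 2) (by omega) (by omega)
    rw [show ((↑(p + 2) : ℤ)).toNat = p + 2 from by omega,
        show ((↑(p + q + 3) : ℤ) - ↑(p + 2)).toNat = q + 1 from by omega,
        show ((↑(p + q + 3) : ℤ)).toNat = p + q + 3 from by omega] at hA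
    rw [show ((↑(p + 2) : ℤ) - 1).toNat = p + 1 from by omega,
        show ((↑(p + q + 3) : ℤ) - (↑(p + 2) - 1)).toNat = q + 2 from by omega,
        show ((↑(p + q + 3) : ℤ)).toNat = p + q + 3 from by omega] at hB
    rw [show ((↑(p + 2) : ℤ) - 1).toNat = p + 1 from by omega,
        show ((↑(p + q + 3) : ℤ) - 1 - (↑(p + 2) - 1)).toNat = q + 1 from by omega,
        show ((↑(p + q + 3) : ℤ) - 1).toNat = p + q + 2 from by omega] at hC
    rw [show ((↑(p + 2) : ℤ)).toNat = p + 2 from by omega,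
        show ((↑(p + q + 3) : ℤ) - 1 - ↑(p + 2)).toNat = q from by omega,
        show ((↑(p + q + 3) : ℤ) - 1).toNat = p + q + 2 from by omega] at hD
    rw [show ((↑(p + 2) : ℤ) - 2).toNat = p from by omega,
        show ((↑(p + q + 3) : ℤ) - 1 - (↑(p + 2) - 2)).toNat = q + 2 from by omega,
        show ((↑(p + q + 3) : ℤ) - 1).toNat = p + q + 2 from by omega] at hE
    rw [show ((↑(p + q + 3) : ℤ)).toNat = p + q + 3 from by omega]
    set A := L (↑(p + q + 3)) (↑(p + 2)) with hAdef
    set B := L (↑(p + q + 3)) (↑(p + 2) - 1) with hBdef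
    set C := L (↑(p + q + 3) - 1) (↑(p + 2) - 1) with hCdef
    set D := L (↑(p + q + 3) - 1) (↑(p + 2)) with hDdef
    set E := L (↑(p + q + 3) - 1) (↑(p + 2) - 2) with hEdef
    have hM : lucasFact (p + 2) * lucasFact (q + 1) * lucasFact (p + 1) * lucasFact (q + 2)
        ≠ 0 := by
      exact mul_ne_zero (mul_ne_zero (mul_ne_zero (lucasFact_ne_zero _)
        (lucasFact_ne_zero _)) (lucasFact_ne_zero _)) (lucasFact_ne_zero _)
    refine mul_left_cancel₀ hM ?_
    have hC2 : (lucasFact (p + 1) * lucasFact (q + 1) * C) ^ 2 = lucasFact (p + q + 2) ^ 2 := by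
      rw [hC]
    have hDE : (lucasFact (p + 2) * lucasFact q * D) * (lucasFact p * lucasFact (q + 2) * E)
        = lucasFact (p + q + 2) ^ 2 := by rw [hD, hE]; ring
    have fP2 : lucasFact (p + 2) = lucas (p + 2) * lucasFact (p + 1) := rfl
    have fP1 : lucasFact (p + 1) = lucas (p + 1) * lucasFact p := rfl
    have fQ2 : lucasFact (q + 2) = lucas (q + 2) * lucasFact (q + 1) := rfl
    have fQ1 : lucasFact (q + 1) = lucas (q + 1) * lucasFact q := rfl
    have fN : lucasFact (p + q + 3) = lucas (p + q + 3) * lucasFact (p + q + 2) := rfl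
    have add : lucas (p + q + 3) =
        lucas (p + 2) * lucas (q + 2) + X 1 * lucas (p + 1) * lucas (q + 1) := by
      have := lucas_add (p + 1) (q + 1)
      rwa [show p + 1 + (q + 1) + 1 = p + q + 3 from by ring] at this
    calc lucasFact (p + 2) * lucasFact (q + 1) * lucasFact (p + 1) * lucasFact (q + 2) * (A * B)
        = (lucasFact (p + 2) * lucasFact (q + 1) * A) *
          (lucasFact (p + 1) * lucasFact (q + 2) * B) := by ring
      _ = lucasFact (p + q + 3) * lucasFact (p + q + 3) := by rw [hA, hB]
      _ = lucas (p + q + 3) * (lucas (p + 2) * lucas (q + 2) *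
            ((lucasFact (p + 1) * lucasFact (q + 1) * C) ^ 2)) +
          lucas (p + q + 3) * X 1 * (lucas (p + 1) * lucas (q + 1) *
            ((lucasFact (p + 2) * lucasFact q * D) * (lucasFact p * lucasFact (q + 2) * E)))
          := by
            rw [hC2, hDE, fN, add]; ring
      _ = lucasFact (p + 2) * lucasFact (q + 1) * lucasFact (p + 1) * lucasFact (q + 2) *
            (lucas (p + q + 3) * (C ^ 2 + X 1 * D * E)) := by
            rw [fP2, fQ2, fP1, fQ1]; ring
  · -- case k = n
    have hkn2 : n = p + 2 := by omega
    subst hkn2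
    have hA := hL (↑(p + 2)) (↑(p + 2)) (by omega) (by omega)
    have hB := hL (↑(p + 2)) (↑(p + 2) - 1) (by omega) (by omega)
    have hC := hL (↑(p + 2) - 1) (↑(p + 2) - 1) (by omega) (by omega)
    have hE := hL (↑(p + 2) - 1) (↑(p + 2) - 2) (by omega) (by omega)
    have hD0 : L (↑(p + 2) - 1) (↑(p + 2)) = 0 := hL0 _ _ (by omega)
    rw [show ((↑(p + 2) : ℤ)).toNat = p + 2 from by omega,
        show ((↑(p + 2) : ℤ) - ↑(p + 2)).toNat = 0 from by omega] at hA
    rw [show ((↑(p + 2) : ℤ) - 1).toNat = p + 1 from by omega,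
        show ((↑(p + 2) : ℤ) - (↑(p + 2) - 1)).toNat = 1 from by omega,
        show ((↑(p + 2) : ℤ)).toNat = p + 2 from by omega] at hB
    rw [show ((↑(p + 2) : ℤ) - 1).toNat = p + 1 from by omega,
        show ((↑(p + 2) : ℤ) - 1 - (↑(p + 2) - 1)).toNat = 0 from by omega] at hC
    rw [show ((↑(p + 2) : ℤ) - 2).toNat = p from by omega,
        show ((↑(p + 2) : ℤ) - 1 - (↑(p + 2) - 2)).toNat = 1 from by omega,
        show ((↑(p + 2) : ℤ) - 1).toNat = p + 1 from by omega] at hE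
    rw [show ((↑(p + 2) : ℤ)).toNat = p + 2 from by omega, hD0]
    have p0 : lucasFact 0 = 1 := rfl
    have p1 : lucasFact 1 = 1 := by simp [lucasFact, lucas]
    rw [p0, mul_one] at hA hC
    rw [p1, mul_one] at hB hE
    set A := L (↑(p + 2)) (↑(p + 2)) with hAdef
    set B := L (↑(p + 2)) (↑(p + 2) - 1) with hBdef
    set C := L (↑(p + 2) - 1) (↑(p + 2) - 1) with hCdef
    set E := L (↑(p + 2) - 1) (↑(p + 2) - 2) with hEdef
    have hM : lucasFact (p + 2) * lucasFact (p + 1) ^ 2 ≠ 0 :=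
      mul_ne_zero (lucasFact_ne_zero _) (pow_ne_zero _ (lucasFact_ne_zero _))
    refine mul_left_cancel₀ hM ?_
    have hC2 : (lucasFact (p + 1) * C) ^ 2 = lucasFact (p + 1) ^ 2 := by rw [hC]
    have fN : lucasFact (p + 2) = lucas (p + 2) * lucasFact (p + 1) := rfl
    calc lucasFact (p + 2) * lucasFact (p + 1) ^ 2 * (A * B)
        = (lucasFact (p + 2) * A) * (lucasFact (p + 1) * B) * lucasFact (p + 1) := by ring
      _ = lucasFact (p + 2) * lucasFact (p + 2) * lucasFact (p + 1) := by rw [hA, hB]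
      _ = lucas (p + 2) * lucasFact (p + 2) * ((lucasFact (p + 1) * C) ^ 2) := by
            rw [hC2, fN]; ring
      _ = lucasFact (p + 2) * lucasFact (p + 1) ^ 2 *
            (lucas (p + 2) * (C ^ 2 + X 1 * 0 * E)) := by ring
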